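/- Let G be a finite connected multigraph with minimum degree at least 3 and cycle space dimension q. If G is not cubic (some vertex has degree > 3), then there exists a connected multigraph G' with the same cycle space dimension q, with one fewer vertex of degree exceeding 3 than G, with minimum degree at least 3, such that G is obtained from G' by contracting a set of edges. -/

import Mathlib

/-!
Split a vertex `v` of degree `n + 3 ≥ 4` into a path on `n + 1` new vertices, hanging two of the
edge-ends formerly at `v` on each end of the path and one on each inner vertex. Every new vertex
then has degree 3 and all other degrees are unchanged; contracting the `n` path edges gives back
`G`, and since the path has one more vertex than edges, `|E| - |V|` does not change.
-/

/-- A finite multigraph: vertex type, edge type, each edge has an unordered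
pair of endpoints (loops and multiple edges allowed). -/
structure Multigraph where
  V : Type
  E : Type
  [fintypeV : Fintype V]
  [fintypeE : Fintype E]
  [decEqV : DecidableEq V]
  ends : E → Sym2 V

attribute [instance] Multigraph.fintypeV Multigraph.fintypeE Multigraph.decEqV

/-- Degree of a vertex: a loop counts twice, any other incident edge once. -/
def Multigraph.degree (G : Multigraph) (v : G.V) : ℕ :=
  ∑ e : G.E, (if G.ends e = Sym2.diag v then 2 else if v ∈ G.ends e then 1 else 0)

/-- Adjacency via some edge. -/
def Multigraph.Adj (G : Multigraph) (u v : G.V) : Prop := ∃ e, G.ends e = s(u, v)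

/-- Connectedness: nonempty and any two vertices joined by a walk. -/
def Multigraph.Connected (G : Multigraph) : Prop :=
  Nonempty G.V ∧ ∀ u v : G.V, Relation.ReflTransGen G.Adj u v

/-- Cubic: every vertex has degree 3. -/
def Multigraph.Cubic (G : Multigraph) : Prop := ∀ v : G.V, G.degree v = 3

/-- `G` is obtained from `G'` by contracting a set `S` of edges: there are a
surjection `π` on vertices and a bijection between the non-contracted edges of
`G'` and the edges of `G`, compatible with endpoints; contracted edges become
loops under `π`, and the fibers of `π` are connected via contracted edges. -/
def Multigraph.IsContractionOf (G G' : Multigraph) : Prop :=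
  ∃ (S : Set G'.E) (π : G'.V → G.V) (τ : {e : G'.E // e ∉ S} ≃ G.E),
    Function.Surjective π ∧
    (∀ e : {e : G'.E // e ∉ S}, G.ends (τ e) = Sym2.map π (G'.ends e.1)) ∧
    (∀ e ∈ S, ∃ x : G.V, Sym2.map π (G'.ends e) = s(x, x)) ∧
    (∀ u v : G'.V, π u = π v →
      Relation.ReflTransGen (fun a b => ∃ e ∈ S, G'.ends e = s(a, b)) u v)

/-- The number of vertices of degree exceeding 3. -/
def Multigraph.degGT3Count (G : Multigraph) : ℕ :=
  (Finset.univ.filter fun v : G.V => 3 < G.degree v).card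

open Finset

theorem exists_card_fiber_eq {α β : Type*} [Fintype α] [Fintype β] [DecidableEq β]
    (c : β → ℕ) (hc : ∑ b, c b = Fintype.card α) :
    ∃ f : α → β, ∀ b, #{a | f a = b} = c b := by
  obtain ⟨e⟩ : Nonempty (α ≃ Σ b, Fin (c b)) := Fintype.card_eq.1 (by simp [hc])
  refine ⟨fun a => (e a).1, fun b => ?_⟩
  rw [← card_map e.toEmbedding, map_filter, map_univ_equiv]
  simp [← univ_sigma_univ, filter_sigma, apply_ite card]

noncomputable section

namespace Multigraph

variable (G : Multigraph)

instance : Std.Symm G.Adj := ⟨fun _ _ ⟨e, he⟩ => ⟨e, he.trans Sym2.eq_swap⟩⟩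

/-- `G.endpoint (e, false)` and `G.endpoint (e, true)` are the two ends of `e` in a fixed order,
so the edge-ends at `v` are the pairs `p` with `G.endpoint p = v`; a loop at `v` gives two. -/
def endpoint (p : G.E × Bool) : G.V :=
  bif p.2 then (G.ends p.1).out.2 else (G.ends p.1).out.1

theorem ends_eq_endpoint (e : G.E) :
    G.ends e = s(G.endpoint (e, false), G.endpoint (e, true)) :=
  (Quot.out_eq (G.ends e)).symm

variable {G}

theorem reflTransGen_adj_symm {a b : G.V} (h : Relation.ReflTransGen G.Adj a b) :
    Relation.ReflTransGen G.Adj b a :=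
  Std.Symm.symm _ _ h

theorem degree_eq_card_of_ends {ep : G.E × Bool → G.V}
    (hep : ∀ e, G.ends e = s(ep (e, false), ep (e, true))) (x : G.V) :
    G.degree x = #{p | ep p = x} := by
  rw [Finset.card_filter, Fintype.sum_prod_type, degree]
  refine Finset.sum_congr rfl fun e _ => ?_
  rw [hep, Fintype.sum_bool]
  simp only [Sym2.diag, Sym2.eq_iff, Sym2.mem_iff, eq_comm (a := x)]
  by_cases h₁ : ep (e, true) = x <;> by_cases h₂ : ep (e, false) = x <;> simp [h₁, h₂]

theorem degree_eq_card_endpoint (x : G.V) :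
    G.degree x = Fintype.card {p // G.endpoint p = x} := by
  rw [degree_eq_card_of_ends G.ends_eq_endpoint, Fintype.card_subtype]

variable (G) in
theorem sum_degree : ∑ x, G.degree x = 2 * Fintype.card G.E := by
  simp_rw [degree_eq_card_of_ends G.ends_eq_endpoint]
  rw [← Finset.card_eq_sum_card_fiberwise (by simp), Finset.card_univ, Fintype.card_prod,
    Fintype.card_bool, mul_comm]

abbrev path (n : ℕ) : Multigraph where
  V := Fin (n + 1)
  E := Fin n
  ends k := s(k.castSucc, k.succ)

theorem path_connected (n : ℕ) : (path n).Connected := by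
  have reach_zero (j : Fin (n + 1)) :
      Relation.ReflTransGen (path n).Adj (0 : Fin (n + 1)) j := by
    induction j using Fin.induction with
    | zero => rfl
    | succ k ih => exact ih.tail ⟨k, rfl⟩
  exact ⟨⟨(0 : Fin (n + 1))⟩, fun i j =>
    (reflTransGen_adj_symm (reach_zero i)).trans (reach_zero j)⟩

theorem degree_path_le (n : ℕ) (j : Fin (n + 1)) : (path n).degree j ≤ 2 := by
  have fiber_le_one {f : Fin n → Fin (n + 1)} (hf : Function.Injective f) :
      #{k | f k = j} ≤ 1 :=
    card_le_one.2 fun a ha b hb => hf <| by simp_all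
  rw [degree_eq_card_of_ends
      (ep := fun p : Fin n × Bool => bif p.2 then p.1.succ else p.1.castSucc) fun _ => rfl,
    card_filter, Fintype.sum_prod_type]
  simp only [Fintype.sum_bool, cond_true, cond_false, sum_add_distrib]
  rw [← card_filter, ← card_filter]
  have := fiber_le_one (Fin.succ_injective n)
  have := fiber_le_one (Fin.castSucc_injective n)
  omega

theorem sum_three_sub_degree_path (n : ℕ) : ∑ j, (3 - (path n).degree j) = n + 3 := by
  have h : ∑ j, (path n).degree j = 2 * n := (path n).sum_degree.trans (by simp)
  have hsum : ∑ j, (3 - (path n).degree j) + ∑ j, (path n).degree j = 3 * (n + 1) := by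
    rw [← sum_add_distrib, sum_congr rfl fun j _ => Nat.sub_add_cancel <|
      (degree_path_le n j).trans (by norm_num)]
    simp [mul_comm]
  omega

section Split

variable (G : Multigraph) (v : G.V) (H : Multigraph)
  (ψ : {p : G.E × Bool // G.endpoint p = v} → H.V)

def reattach (p : G.E × Bool) : {u // u ≠ v} ⊕ H.V :=
  if h : G.endpoint p = v then .inr (ψ ⟨p, h⟩) else .inl ⟨G.endpoint p, h⟩

abbrev splitAt : Multigraph where
  V := {u : G.V // u ≠ v} ⊕ H.V
  E := G.E ⊕ H.E
  ends
    | .inl e => s(reattach G v H ψ (e, false), reattach G v H ψ (e, true))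
    | .inr f => (H.ends f).map .inr

def unsplit : (splitAt G v H ψ).V → G.V := Sum.elim Subtype.val fun _ => v

theorem unsplit_reattach (p : G.E × Bool) :
    unsplit G v H ψ (reattach G v H ψ p) = G.endpoint p := by
  unfold reattach
  split_ifs with h
  exacts [h.symm, rfl]

theorem reattach_eq_inl {p : G.E × Bool} {u : {u // u ≠ v}} :
    reattach G v H ψ p = .inl u ↔ G.endpoint p = u := by
  unfold reattach
  split_ifs with h
  · simp [h, u.2.symm]
  · simp [Subtype.ext_iff]

theorem reattach_eq_inr {p : G.E × Bool} {t : H.V} :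
    reattach G v H ψ p = .inr t ↔ ∃ h : G.endpoint p = v, ψ ⟨p, h⟩ = t := by
  unfold reattach
  split_ifs with h <;> simp [h]

theorem degree_splitAt (x : (splitAt G v H ψ).V) :
    (splitAt G v H ψ).degree x =
      #{p | reattach G v H ψ p = x} + #{p | Sum.inr (H.endpoint p) = x} := by
  let ep : (splitAt G v H ψ).E × Bool → (splitAt G v H ψ).V
    | (.inl e, b) => reattach G v H ψ (e, b)
    | (.inr f, b) => .inr (H.endpoint (f, b))
  have hep (e : (splitAt G v H ψ).E) :
      (splitAt G v H ψ).ends e = s(ep (e, false), ep (e, true)) := by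
    rcases e with e | f
    · rfl
    · exact (congrArg (Sym2.map Sum.inr) (H.ends_eq_endpoint f)).trans (Sym2.map_mk _ _ _)
  rw [degree_eq_card_of_ends hep, card_filter, ← (Equiv.sumProdDistrib _ _ _).symm.sum_comp,
    Fintype.sum_sum_type, card_filter, card_filter]
  rfl

theorem degree_splitAt_inl (u : {u // u ≠ v}) :
    (splitAt G v H ψ).degree (.inl u) = G.degree u := by
  simp [degree_splitAt, reattach_eq_inl, degree_eq_card_of_ends G.ends_eq_endpoint]

theorem degree_splitAt_inr (t : H.V) :
    (splitAt G v H ψ).degree (.inr t) = #{d | ψ d = t} + H.degree t := by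
  rw [degree_splitAt, degree_eq_card_of_ends H.ends_eq_endpoint]
  simp only [reattach_eq_inr, Sum.inr.injEq, ← Fintype.card_subtype]
  rw [Fintype.card_congr (Equiv.subtypeSubtypeEquivSubtypeExists _ _)]

theorem reflTransGen_splitAt_inr {s t : H.V} (h : Relation.ReflTransGen H.Adj s t) :
    Relation.ReflTransGen
      (fun a b => ∃ e ∈ Set.range Sum.inr, (splitAt G v H ψ).ends e = s(a, b))
      (.inr s) (.inr t) :=
  h.lift _ fun a b ⟨f, hf⟩ => ⟨.inr f, ⟨f, rfl⟩, by simp [hf]⟩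

theorem splitAt_connected (hG : G.Connected) (hH : H.Connected) :
    (splitAt G v H ψ).Connected := by
  obtain ⟨⟨t₀⟩, hH⟩ := hH
  let embed (u : G.V) : (splitAt G v H ψ).V := if h : u = v then .inr t₀ else .inl ⟨u, h⟩
  have reach_embed_unsplit (x : (splitAt G v H ψ).V) :
      Relation.ReflTransGen (splitAt G v H ψ).Adj x (embed (unsplit G v H ψ x)) := by
    rcases x with u | t
    · simp only [embed, unsplit, Sum.elim_inl, dif_neg u.2]
      rfl
    · simp only [embed, unsplit, Sum.elim_inr, dite_true]
      exact Relation.ReflTransGen.mono (fun _ _ ⟨e, _, he⟩ => ⟨e, he⟩) _ _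
        (reflTransGen_splitAt_inr G v H ψ (hH t t₀))
  have embed_adj {a b : G.V} (hab : G.Adj a b) :
      Relation.ReflTransGen (splitAt G v H ψ).Adj (embed a) (embed b) := by
    obtain ⟨e, he⟩ := hab
    have reach_reattach (b : Bool) := unsplit_reattach G v H ψ (e, b) ▸
      reach_embed_unsplit (reattach G v H ψ (e, b))
    have reach := ((reflTransGen_adj_symm (reach_reattach false)).tail ⟨.inl e, rfl⟩).trans
      (reach_reattach true)
    rw [G.ends_eq_endpoint, Sym2.eq_iff] at he
    rcases he with ⟨ha, hb⟩ | ⟨ha, hb⟩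
    · rwa [← ha, ← hb]
    · rw [← ha, ← hb]
      exact reflTransGen_adj_symm reach
  refine ⟨⟨.inr t₀⟩, fun x y => (reach_embed_unsplit x).trans ?_⟩
  exact ((hG.2 _ _).lift' embed fun _ _ => embed_adj).trans
    (reflTransGen_adj_symm (reach_embed_unsplit y))

theorem isContractionOf_splitAt (hH : H.Connected) : G.IsContractionOf (splitAt G v H ψ) := by
  obtain ⟨⟨t₀⟩, hH⟩ := hH
  refine ⟨Set.range Sum.inr, unsplit G v H ψ,
    (Equiv.subtypeEquivRight fun e => by cases e <;> simp).trans Equiv.sumIsLeft,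
    fun u => ?_, ?_, ?_, ?_⟩
  · by_cases h : u = v
    exacts [⟨.inr t₀, h.symm⟩, ⟨.inl ⟨u, h⟩, rfl⟩]
  · rintro ⟨e | f, he⟩
    · simp [G.ends_eq_endpoint e, unsplit_reattach]
    · exact absurd ⟨f, rfl⟩ he
  · rintro _ ⟨f, rfl⟩
    refine ⟨v, ?_⟩
    change Sym2.map _ ((H.ends f).map Sum.inr) = _
    rw [H.ends_eq_endpoint f]
    rfl
  · rintro (u | s) (u' | t) h
    · cases Subtype.ext h
      rfl
    · exact absurd h u.2
    · exact absurd h.symm u'.2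
    · exact reflTransGen_splitAt_inr G v H ψ (hH s t)

theorem card_splitAt_E_add_one {q : ℕ} (hH : Fintype.card H.E + 1 = Fintype.card H.V)
    (hq : Fintype.card G.E + 1 = Fintype.card G.V + q) :
    Fintype.card (splitAt G v H ψ).E + 1 = Fintype.card (splitAt G v H ψ).V + q := by
  have : Fintype.card {u // u ≠ v} + 1 = Fintype.card G.V := by
    rw [← Fintype.card_option, Fintype.card_congr (Equiv.optionSubtypeNe v)]
  simp only [Fintype.card_sum]
  omega

theorem degGT3Count_splitAt (hv : 3 < G.degree v)
    (hH : ∀ t, (splitAt G v H ψ).degree (.inr t) ≤ 3) :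
    (splitAt G v H ψ).degGT3Count + 1 = G.degGT3Count := by
  simp only [degGT3Count, card_filter, Fintype.sum_sum_type,
    Fintype.sum_eq_add_sum_subtype_ne _ v]
  simp [degree_splitAt_inl, hv, (hH _).not_gt, add_comm]

end Split

end Multigraph

end

open Multigraph in
/-- If a finite connected multigraph `G` of minimum degree ≥ 3
and cycle space dimension `q` is not cubic, then there is a connected
multigraph `G'` with the same cycle space dimension, minimum degree ≥ 3 and
one fewer vertex of degree exceeding 3, such that `G` is obtained from `G'`
by contracting a set of edges. -/
theorem stmt15 (G : Multigraph) (hconn : G.Connected) (q : ℕ)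
    (hq : Fintype.card G.E + 1 = Fintype.card G.V + q)
    (hmin : ∀ v : G.V, 3 ≤ G.degree v)
    (hnotcubic : ∃ v : G.V, 3 < G.degree v) :
    ∃ G' : Multigraph, G'.Connected ∧
      Fintype.card G'.E + 1 = Fintype.card G'.V + q ∧
      (∀ v : G'.V, 3 ≤ G'.degree v) ∧
      G'.degGT3Count + 1 = G.degGT3Count ∧
      G.IsContractionOf G' := by
  obtain ⟨v, hv⟩ := hnotcubic
  obtain ⟨n, hn⟩ : ∃ n, G.degree v = n + 3 := ⟨G.degree v - 3, by omega⟩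
  obtain ⟨ψ, hψ⟩ := exists_card_fiber_eq (fun j => 3 - (path n).degree j)
    (α := {p // G.endpoint p = v})
    (by rw [sum_three_sub_degree_path, ← hn, degree_eq_card_endpoint])
  have degree_inr (t : Fin (n + 1)) : (splitAt G v (path n) ψ).degree (.inr t) = 3 := by
    have := degree_path_le n t
    rw [degree_splitAt_inr, hψ]
    omega
  refine ⟨splitAt G v (path n) ψ, splitAt_connected G v _ ψ hconn (path_connected n),
    card_splitAt_E_add_one G v _ ψ (by simp) hq, ?_,
    degGT3Count_splitAt G v _ ψ hv fun t => (degree_inr t).le,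
    isContractionOf_splitAt G v _ ψ (path_connected n)⟩
  rintro (u | t)
  · exact (degree_splitAt_inl G v _ ψ u).symm ▸ hmin u
  · exact (degree_inr t).ge
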